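/- arXiv:2410.11309 — 8 statements merged into one kernel-verified Lean document; each statement's English description precedes it below -/
import Mathlib

section
/- Great orthogonality theorem for projective irreps (diagonal case): let D be an irreducible unitary ω-projective representation of a finite group G of dimension d, where |ω g h| = 1 for all g, h. Then for all indices i, j, k, l, ∑_{g ∈ G} (D g)_{i j} · conj((D g)_{k l}) = (|G| / d) · δ_{i k} · δ_{j l}. -/
open Matrix Kronecker BigOperators

noncomputable section

/-- A unitary `ω`-projective representation of `G` of dimension `d`. -/
def IsUnitaryProjRep {G : Type} [Group G] (ω : G → G → ℂ) {d : ℕ}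
    (D : G → Matrix (Fin d) (Fin d) ℂ) : Prop :=
  (∀ g, D g ∈ Matrix.unitaryGroup (Fin d) ℂ) ∧
    ∀ g h, D g * D h = ω g h • D (g * h)

/-- Irreducibility: the only invariant subspaces of `ℂ^d` are `⊥` and `⊤`. -/
def IsIrred {G : Type} [Group G] {d : ℕ}
    (D : G → Matrix (Fin d) (Fin d) ℂ) : Prop :=
  ∀ p : Submodule ℂ (Fin d → ℂ),
    (∀ g : G, ∀ v ∈ p, (D g).mulVec v ∈ p) → p = ⊥ ∨ p = ⊤

/-- Equivalence of projective representations (of possibly different stated dimensions). -/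
def ProjEquiv {G : Type} [Group G] {d₁ d₂ : ℕ}
    (D₁ : G → Matrix (Fin d₁) (Fin d₁) ℂ)
    (D₂ : G → Matrix (Fin d₂) (Fin d₂) ℂ) : Prop :=
  ∃ h : d₁ = d₂, ∃ S : Matrix (Fin d₂) (Fin d₂) ℂ, IsUnit S.det ∧
    ∀ g, D₂ g = S⁻¹ * (Matrix.reindex (finCongr h) (finCongr h) (D₁ g)) * S

/-- A normalized unitary 2-cocycle on `G`. -/
def IsCocycle {G : Type} [Group G] (ω : G → G → ℂ) : Prop :=
  (∀ g h, ‖ω g h‖ = 1) ∧ (∀ g, ω 1 g = 1) ∧ (∀ g, ω g 1 = 1) ∧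
    ∀ g h k, ω g h * ω (g * h) k = ω g (h * k) * ω h k

/-- The regular representation matrix of `g`. -/
def regRep (G : Type) [Group G] [DecidableEq G] (g : G) : Matrix G G ℂ :=
  fun h h' => if h = g * h' then 1 else 0

/-- The `ω`-projective regular representation matrix of `g`. -/
def projRegRep {G : Type} [Group G] [DecidableEq G] (ω : G → G → ℂ) (g : G) :
    Matrix G G ℂ :=
  fun h h' => if h = g * h' then ω g h' else 0

/-!
Averaging a matrix `A` over the conjugation action `X ↦ D g * X * (D g)ᴴ` gives a matrix commuting
with every `D g`: the cocycle phases cancel since unitarity of `D g`, `D h`, `D (g * h)` forces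
`|ω g h| = 1`. By Schur's lemma the average is a scalar, and comparing traces identifies it as
`|G| * tr A / d`. For `A` the matrix unit `E_{jl}`, its `(i, k)` entry is the sum in question.
-/

theorem Matrix.mul_mul_conjTranspose_eq_of_eq_smul {n : Type*} [Fintype n] [DecidableEq n]
    {U W : Matrix n n ℂ} {c : ℂ} (hU : U ∈ unitaryGroup n ℂ) (hW : W ∈ unitaryGroup n ℂ)
    (h : U = c • W) (A : Matrix n n ℂ) : U * A * Uᴴ = W * A * Wᴴ := by
  have hscale : ∀ X : Matrix n n ℂ, U * X * Uᴴ = (c * starRingEnd ℂ c) • (W * X * Wᴴ) := by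
    intro X
    rw [h, conjTranspose_smul]
    simp only [smul_mul, Matrix.mul_smul, smul_smul, mul_comm (star c)]
    rfl
  have hphase : (c * starRingEnd ℂ c) • (1 : Matrix n n ℂ) = 1 := by
    have h1 := hscale 1
    rwa [Matrix.mul_one, Matrix.mul_one, ← star_eq_conjTranspose, ← star_eq_conjTranspose,
      mem_unitaryGroup_iff.mp hU, mem_unitaryGroup_iff.mp hW, eq_comm] at h1
  rw [hscale, ← one_mul (W * A * Wᴴ), ← smul_mul, hphase, one_mul]

section Twirl

variable {G : Type} [Fintype G] {n : Type*} [Fintype n] [DecidableEq n]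

def twirl (D : G → Matrix n n ℂ) (A : Matrix n n ℂ) : Matrix n n ℂ :=
  ∑ g, D g * A * (D g)ᴴ

theorem twirl_single_apply (D : G → Matrix n n ℂ) (i j k l : n) :
    twirl D (single j l 1) i k = ∑ g, D g i j * starRingEnd ℂ (D g k l) := by
  rw [twirl, Matrix.sum_apply]
  refine Finset.sum_congr rfl fun g _ => ?_
  rw [mul_apply, Finset.sum_eq_single l (fun m _ hm => by simp [hm]) (by simp)]
  simp

theorem trace_twirl {D : G → Matrix n n ℂ}
    (hD : ∀ g, D g ∈ unitaryGroup n ℂ) (A : Matrix n n ℂ) :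
    (twirl D A).trace = Fintype.card G * A.trace := by
  have hconj : ∀ g, (D g * A * (D g)ᴴ).trace = A.trace := fun g => by
    rw [trace_mul_comm, ← Matrix.mul_assoc, ← star_eq_conjTranspose,
      mem_unitaryGroup_iff'.mp (hD g), one_mul]
  simp [twirl, trace_sum, hconj]

end Twirl

theorem IsIrred.eq_smul_one_of_commute {G : Type} [Group G] {d : ℕ} [NeZero d]
    {D : G → Matrix (Fin d) (Fin d) ℂ} (hirr : IsIrred D) {M : Matrix (Fin d) (Fin d) ℂ}
    (hM : ∀ g, Commute (D g) M) : ∃ c : ℂ, M = c • 1 := by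
  obtain ⟨c, hc⟩ := Module.End.exists_eigenvalue (mulVecLin M)
  have hinv : ∀ g, ∀ v ∈ Module.End.eigenspace (mulVecLin M) c,
      (D g).mulVec v ∈ Module.End.eigenspace (mulVecLin M) c := by
    intro g v hv
    rw [Module.End.mem_eigenspace_iff, mulVecLin_apply] at hv ⊢
    rw [mulVec_mulVec, ← (hM g).eq, ← mulVec_mulVec, hv, mulVec_smul]
  have htop := (hirr _ hinv).resolve_left hc
  refine ⟨c, mulVec_injective (funext fun v => ?_)⟩
  have hv := Module.End.mem_eigenspace_iff.mp (htop ▸ Submodule.mem_top (x := v))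
  rw [mulVecLin_apply] at hv
  rw [hv, smul_mulVec, one_mulVec]

namespace IsUnitaryProjRep

variable {G : Type} [Group G] {ω : G → G → ℂ} {d : ℕ} {D : G → Matrix (Fin d) (Fin d) ℂ}

theorem conj_conj (hD : IsUnitaryProjRep ω D) (g h : G) (A : Matrix (Fin d) (Fin d) ℂ) :
    D g * (D h * A * (D h)ᴴ) * (D g)ᴴ = D (g * h) * A * (D (g * h))ᴴ := by
  rw [← mul_mul_conjTranspose_eq_of_eq_smul (mul_mem (hD.1 g) (hD.1 h)) (hD.1 (g * h))
    (hD.2 g h), conjTranspose_mul]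
  simp only [Matrix.mul_assoc]

variable [Fintype G]

theorem conj_twirl (hD : IsUnitaryProjRep ω D) (g : G) (A : Matrix (Fin d) (Fin d) ℂ) :
    D g * twirl D A * (D g)ᴴ = twirl D A := by
  simp only [twirl, Finset.mul_sum, Finset.sum_mul, hD.conj_conj]
  exact Fintype.sum_equiv (Equiv.mulLeft g) _ _ fun _ => rfl

theorem commute_twirl (hD : IsUnitaryProjRep ω D) (g : G) (A : Matrix (Fin d) (Fin d) ℂ) :
    Commute (D g) (twirl D A) := by
  calc D g * twirl D A = D g * twirl D A * ((D g)ᴴ * D g) := by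
        rw [← star_eq_conjTranspose, mem_unitaryGroup_iff'.mp (hD.1 g), Matrix.mul_one]
    _ = twirl D A * D g := by rw [← Matrix.mul_assoc, hD.conj_twirl]

theorem twirl_eq_smul_one [NeZero d] (hD : IsUnitaryProjRep ω D) (hirr : IsIrred D)
    (A : Matrix (Fin d) (Fin d) ℂ) :
    twirl D A = ((Fintype.card G : ℂ) / d * A.trace) • 1 := by
  obtain ⟨c, hc⟩ := hirr.eq_smul_one_of_commute (hD.commute_twirl · A)
  have htrace : c * d = Fintype.card G * A.trace := by
    simpa [hc] using trace_twirl hD.1 A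
  rw [hc, div_mul_eq_mul_div, ← htrace, mul_div_cancel_right₀ _ (NeZero.ne (d : ℂ))]

end IsUnitaryProjRep

theorem great_orthogonality_diagonal_general
    {G : Type} [Group G] [Fintype G]
    (ω : G → G → ℂ)
    {d : ℕ} {D : G → Matrix (Fin d) (Fin d) ℂ}
    (hD : IsUnitaryProjRep ω D) (hirr : IsIrred D)
    (i j k l : Fin d) :
    ∑ g : G, D g i j * (starRingEnd ℂ) (D g k l)
      = ((Fintype.card G : ℂ) / (d : ℂ))
          * (if i = k then 1 else 0) * (if j = l then 1 else 0) := by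
  have : NeZero d := ⟨i.pos.ne'⟩
  have htrace : (single j l (1 : ℂ)).trace = if j = l then 1 else 0 := by
    split_ifs with hjl
    · rw [hjl, trace_single_eq_same]
    · exact trace_single_eq_of_ne _ _ _ hjl
  rw [← twirl_single_apply, hD.twirl_eq_smul_one hirr, htrace, Matrix.smul_apply, one_apply]
  split_ifs <;> simp

/-- great orthogonality theorem for projective irreps (diagonal case). -/
theorem great_orthogonality_diagonal
    {G : Type} [Group G] [Fintype G]
    (ω : G → G → ℂ) (hω : ∀ g h, ‖ω g h‖ = 1)
    {d : ℕ} {D : G → Matrix (Fin d) (Fin d) ℂ}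
    (hD : IsUnitaryProjRep ω D) (hirr : IsIrred D)
    (i j k l : Fin d) :
    ∑ g : G, D g i j * (starRingEnd ℂ) (D g k l)
      = ((Fintype.card G : ℂ) / (d : ℂ))
          * (if i = k then 1 else 0) * (if j = l then 1 else 0) :=
  great_orthogonality_diagonal_general ω hD hirr i j k l
end
end

section
/- Great orthogonality theorem for projective irreps (off-diagonal case): let D₁, D₂ be irreducible unitary ω-projective representations of a finite group G (with the same ω, |ω g h| = 1) of dimensions d₁ and d₂, and suppose D₁ and D₂ are not equivalent. Then for all indices i, j, k, l, ∑_{g ∈ G} (D₁ g)_{i j} · conj((D₂ g)_{k l}) = 0. -/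
/-!
For any `X`, the average `M = ∑ g, D₁ g * X * (D₂ g)ᴴ` intertwines `D₁` and `D₂`: substituting
`g ↦ h * g`, the cocycle factors `ω h g` produced by `D₁` and by `D₂` cancel because `D₂` is
unitary and `|ω h g| = 1`. By Schur's lemma a nonzero intertwiner between irreducible
representations is invertible and would make them equivalent, so `M = 0`; taking `X` to be the
matrix unit at `(j, l)`, the `(i, k)` entry of `M` is the sum in question.
-/

open Matrix Kronecker BigOperators

noncomputable section

section Schur

variable {G : Type} [Group G] {d₁ d₂ : ℕ}
  {D₁ : G → Matrix (Fin d₁) (Fin d₁) ℂ} {D₂ : G → Matrix (Fin d₂) (Fin d₂) ℂ}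
  {M : Matrix (Fin d₁) (Fin d₂) ℂ}

theorem range_mulVecLin_eq_top_of_intertwines (hirr : IsIrred D₁)
    (hM : ∀ g, D₁ g * M = M * D₂ g) (hM0 : M ≠ 0) :
    LinearMap.range M.mulVecLin = ⊤ := by
  refine (hirr _ ?_).resolve_left fun h ↦ hM0 ?_
  · rintro g _ ⟨w, rfl⟩
    exact ⟨D₂ g *ᵥ w, by simp [mulVec_mulVec, hM]⟩
  · rw [LinearMap.range_eq_bot, ← Matrix.toLin'_apply'] at h
    exact Matrix.toLin'.map_eq_zero_iff.mp h

theorem ker_mulVecLin_eq_bot_of_intertwines (hirr : IsIrred D₂)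
    (hM : ∀ g, D₁ g * M = M * D₂ g) (hM0 : M ≠ 0) :
    LinearMap.ker M.mulVecLin = ⊥ := by
  refine (hirr _ ?_).resolve_right fun h ↦ hM0 ?_
  · intro g v hv
    simp only [LinearMap.mem_ker, mulVecLin_apply] at hv ⊢
    rw [mulVec_mulVec, ← hM, ← mulVec_mulVec, hv, mulVec_zero]
  · rw [LinearMap.ker_eq_top, ← Matrix.toLin'_apply'] at h
    exact Matrix.toLin'.map_eq_zero_iff.mp h

theorem projEquiv_of_intertwines (hirr₁ : IsIrred D₁) (hirr₂ : IsIrred D₂)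
    (hM : ∀ g, D₁ g * M = M * D₂ g) (hM0 : M ≠ 0) : ProjEquiv D₁ D₂ := by
  have hbij : Function.Bijective M.mulVecLin :=
    ⟨LinearMap.ker_eq_bot.mp (ker_mulVecLin_eq_bot_of_intertwines hirr₂ hM hM0),
      LinearMap.range_eq_top.mp (range_mulVecLin_eq_top_of_intertwines hirr₁ hM hM0)⟩
  have hd : d₂ = d₁ := by
    simpa using (LinearEquiv.ofBijective _ hbij).finrank_eq
  subst hd
  have hdet : IsUnit M.det :=
    (isUnit_iff_isUnit_det M).mp (mulVec_injective_iff_isUnit.mp hbij.1)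
  refine ⟨rfl, M, hdet, fun g ↦ ?_⟩
  rw [finCongr_refl, reindex_refl_refl, mul_assoc, hM, ← mul_assoc, nonsing_inv_mul M hdet,
    one_mul]

end Schur

section ProjRep

variable {G : Type} [Group G] {ω : G → G → ℂ} {d : ℕ} {D : G → Matrix (Fin d) (Fin d) ℂ}

theorem conjTranspose_mul_of_isUnitaryProjRep (hω : ∀ g h, ‖ω g h‖ = 1)
    (hD : IsUnitaryProjRep ω D) (g h : G) :
    (D (h * g))ᴴ * D h = ω h g • (D g)ᴴ := by
  have hunit : (D h)ᴴ * D h = 1 := by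
    simpa [star_eq_conjTranspose] using mem_unitaryGroup_iff'.mp (hD.1 h)
  have hconj : (D g)ᴴ * (D h)ᴴ = star (ω h g) • (D (h * g))ᴴ := by
    rw [← conjTranspose_mul, hD.2, conjTranspose_smul]
  have habs : ω h g * star (ω h g) = 1 := by
    rw [RCLike.star_def, Complex.mul_conj', hω, Complex.ofReal_one, one_pow]
  calc (D (h * g))ᴴ * D h
      = (ω h g * star (ω h g)) • ((D (h * g))ᴴ * D h) := by rw [habs, one_smul]
    _ = ω h g • ((D g)ᴴ * ((D h)ᴴ * D h)) := by
        rw [← mul_assoc, hconj, smul_mul, smul_smul]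
    _ = ω h g • (D g)ᴴ := by rw [hunit, mul_one]

end ProjRep

section Averaging

variable {G : Type} [Fintype G] {d₁ d₂ : ℕ}
  {D₁ : G → Matrix (Fin d₁) (Fin d₁) ℂ} {D₂ : G → Matrix (Fin d₂) (Fin d₂) ℂ}

def groupAverage (D₁ : G → Matrix (Fin d₁) (Fin d₁) ℂ) (D₂ : G → Matrix (Fin d₂) (Fin d₂) ℂ)
    (X : Matrix (Fin d₁) (Fin d₂) ℂ) : Matrix (Fin d₁) (Fin d₂) ℂ :=
  ∑ g, D₁ g * X * (D₂ g)ᴴ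

theorem groupAverage_intertwines [Group G] {ω : G → G → ℂ} (hω : ∀ g h, ‖ω g h‖ = 1)
    (hmul₁ : ∀ g h, D₁ g * D₁ h = ω g h • D₁ (g * h)) (h₂ : IsUnitaryProjRep ω D₂)
    (X : Matrix (Fin d₁) (Fin d₂) ℂ) (h : G) :
    D₁ h * groupAverage D₁ D₂ X = groupAverage D₁ D₂ X * D₂ h := by
  rw [groupAverage, Matrix.mul_sum, Matrix.sum_mul,
    ← Equiv.sum_comp (Equiv.mulLeft h) fun g ↦ D₁ g * X * (D₂ g)ᴴ * D₂ h]
  refine Finset.sum_congr rfl fun g _ ↦ ?_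
  dsimp only [Equiv.coe_mulLeft]
  rw [Matrix.mul_assoc _ (D₂ (h * g))ᴴ, conjTranspose_mul_of_isUnitaryProjRep hω h₂,
    ← Matrix.mul_assoc, ← Matrix.mul_assoc, hmul₁, smul_mul, smul_mul, Matrix.mul_smul]

theorem groupAverage_single_apply (i j : Fin d₁) (k l : Fin d₂) :
    groupAverage D₁ D₂ (single j l 1) i k = ∑ g, D₁ g i j * star (D₂ g k l) := by
  simp [groupAverage, Matrix.sum_apply, mul_apply, single, ite_and]

end Averaging

/-- great orthogonality theorem for projective irreps (off-diagonal case). -/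
theorem great_orthogonality_offdiagonal
    {G : Type} [Group G] [Fintype G]
    (ω : G → G → ℂ) (hω : ∀ g h, ‖ω g h‖ = 1)
    {d₁ d₂ : ℕ}
    {D₁ : G → Matrix (Fin d₁) (Fin d₁) ℂ} {D₂ : G → Matrix (Fin d₂) (Fin d₂) ℂ}
    (h₁ : IsUnitaryProjRep ω D₁) (h₂ : IsUnitaryProjRep ω D₂)
    (hirr₁ : IsIrred D₁) (hirr₂ : IsIrred D₂)
    (hne : ¬ ProjEquiv D₁ D₂)
    (i j : Fin d₁) (k l : Fin d₂) :
    ∑ g : G, D₁ g i j * (starRingEnd ℂ) (D₂ g k l) = 0 := by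
  have hM : groupAverage D₁ D₂ (single j l 1) = 0 := by
    by_contra hM0
    exact hne <| projEquiv_of_intertwines hirr₁ hirr₂
      (groupAverage_intertwines hω h₁.2 h₂ _) hM0
  simpa [hM] using (groupAverage_single_apply (D₁ := D₁) (D₂ := D₂) i j k l).symm
end
end

section
/- Dimension equation for projective irreps: let G be a finite group, ω a normalized unitary 2-cocycle on G, and let (D^α)_{α ∈ A} be a family of pairwise inequivalent irreducible unitary ω-projective representations of G, with dimensions d_α, such that every irreducible unitary ω-projective representation of G (with the same ω) is equivalent to D^α for some α ∈ A. Then ∑_{α ∈ A} d_α² = |G|. -/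
open Matrix Kronecker BigOperators

noncomputable section

/-! The matrix coefficients `g ↦ D^α(g)ᵢⱼ` are nonzero and pairwise orthogonal in `ℓ²(G)` by
the Schur orthogonality relations, which survive the twist because `|ω| = 1` makes the average
`∑_g D^α(g) X D^β(g)ᴴ` an intertwiner; hence they are linearly independent and
`∑ d_α² ≤ |G|`. Conversely, a unitary `ω`-representation splits into an orthogonal sum of
irreducible ones, each equivalent to some `D^α`, so all of its matrix coefficients lie in the
span of those of the `D^α`. For the `ω`-twisted regular representation these coefficients
include every delta function, so the span is all of `ℂ^G`. -/

open Submodule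
open scoped InnerProductSpace

theorem mul_single_one_mul_apply {R l m n o : Type*} [Semiring R] [Fintype m] [Fintype n]
    [DecidableEq m] [DecidableEq n] (M : Matrix l m R) (N : Matrix n o R) (i : l) (j : m)
    (k : n) (x : o) : (M * single j k (1 : R) * N) i x = M i j * N k x := by
  simp [Matrix.mul_apply, Matrix.single_apply, ite_and]

variable {G : Type} {ω : G → G → ℂ}

theorem IsCocycle.star_mul_self [Group G] (hω : IsCocycle ω) (g h : G) :
    star (ω g h) * ω g h = 1 := by
  rw [Complex.star_def, mul_comm, Complex.mul_conj, Complex.normSq_eq_norm_sq, hω.1 g h]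
  norm_num

section MatrixRep

variable [Group G] {d d₁ d₂ : ℕ} {D : G → Matrix (Fin d) (Fin d) ℂ}
  {D₁ : G → Matrix (Fin d₁) (Fin d₁) ℂ} {D₂ : G → Matrix (Fin d₂) (Fin d₂) ℂ}

theorem IsUnitaryProjRep.conjTranspose_mul_self (hD : IsUnitaryProjRep ω D) (g : G) :
    (D g)ᴴ * D g = 1 :=
  (Unitary.mem_iff.mp (hD.1 g)).1

theorem IsIrred.eq_zero_or_ker_eq_bot (hirr₂ : IsIrred D₂) {T : Matrix (Fin d₁) (Fin d₂) ℂ}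
    (hT : ∀ g, D₁ g * T = T * D₂ g) : T = 0 ∨ LinearMap.ker T.mulVecLin = ⊥ := by
  refine (hirr₂ _ fun g v hv => ?_).symm.imp (fun htop => toLin'.injective ?_) id
  · simp only [LinearMap.mem_ker, mulVecLin_apply] at hv ⊢
    rw [mulVec_mulVec, ← hT, ← mulVec_mulVec, hv, mulVec_zero]
  · exact (LinearMap.ker_eq_top.mp htop).trans mulVecLin_zero.symm

theorem IsIrred.eq_zero_or_range_eq_top (hirr₁ : IsIrred D₁) {T : Matrix (Fin d₁) (Fin d₂) ℂ}
    (hT : ∀ g, D₁ g * T = T * D₂ g) : T = 0 ∨ LinearMap.range T.mulVecLin = ⊤ := by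
  refine (hirr₁ _ fun g v hv => ?_).imp (fun hbot => toLin'.injective ?_) id
  · obtain ⟨u, rfl⟩ := hv
    exact ⟨D₂ g *ᵥ u, by simp only [mulVecLin_apply, mulVec_mulVec, hT]⟩
  · exact (LinearMap.range_eq_bot.mp hbot).trans mulVecLin_zero.symm

theorem eq_zero_or_projEquiv_of_intertwines (hirr₁ : IsIrred D₁) (hirr₂ : IsIrred D₂)
    {T : Matrix (Fin d₁) (Fin d₂) ℂ} (hT : ∀ g, D₁ g * T = T * D₂ g) :
    T = 0 ∨ ProjEquiv D₁ D₂ := by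
  rcases hirr₂.eq_zero_or_ker_eq_bot hT with h0 | hker
  · exact Or.inl h0
  rcases hirr₁.eq_zero_or_range_eq_top hT with h0 | hrange
  · exact Or.inl h0
  right
  have hdim : d₂ = d₁ := by
    simpa using (LinearEquiv.ofBijective T.mulVecLin
      ⟨LinearMap.ker_eq_bot.mp hker, LinearMap.range_eq_top.mp hrange⟩).finrank_eq
  subst hdim
  have hdet : IsUnit T.det := by
    rw [isUnit_iff_ne_zero, Ne, ← exists_mulVec_eq_zero_iff]
    rintro ⟨v, hv0, hv⟩
    exact hv0 (LinearMap.ker_eq_bot.mp hker (by simpa using hv))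
  refine ⟨rfl, T, hdet, fun g => ?_⟩
  simp [Matrix.mul_assoc, hT, nonsing_inv_mul_cancel_left _ _ hdet]

theorem IsIrred.exists_eq_smul_one_of_commute (hirr : IsIrred D) {T : Matrix (Fin d) (Fin d) ℂ}
    (hT : ∀ g, D g * T = T * D g) : ∃ c : ℂ, T = c • 1 := by
  rcases isEmpty_or_nonempty (Fin d) with hd | hd
  · exact ⟨0, Subsingleton.elim _ _⟩
  obtain ⟨c, hc⟩ := Module.End.exists_eigenvalue T.mulVecLin
  obtain ⟨v, hv⟩ := hc.exists_hasEigenvector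
  refine ⟨c, sub_eq_zero.mp
    ((hirr.eq_zero_or_ker_eq_bot (D₁ := D) fun g => ?_).resolve_right fun hker => ?_)⟩
  · simp only [Matrix.mul_sub, Matrix.sub_mul, hT, Matrix.mul_smul, Matrix.smul_mul,
      Matrix.mul_one, Matrix.one_mul]
  · refine hv.2 (LinearMap.ker_eq_bot'.mp hker v ?_)
    simp [hv.apply_eq_smul]

theorem IsUnitaryProjRep.intertwines_sum [Fintype G] (hω : IsCocycle ω)
    (hD₁ : IsUnitaryProjRep ω D₁) (hD₂ : IsUnitaryProjRep ω D₂) (X : Matrix (Fin d₁) (Fin d₂) ℂ)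
    (h : G) :
    D₁ h * ∑ g, D₁ g * X * (D₂ g)ᴴ = (∑ g, D₁ g * X * (D₂ g)ᴴ) * D₂ h := by
  rw [Matrix.mul_sum, Matrix.sum_mul]
  refine Fintype.sum_equiv (Equiv.mulLeft h) _ _ fun g => ?_
  have hstar : (D₂ (h * g))ᴴ * D₂ h = ω h g • (D₂ g)ᴴ := by
    have h1 : (D₂ g)ᴴ * (D₂ h)ᴴ = star (ω h g) • (D₂ (h * g))ᴴ := by
      rw [← conjTranspose_mul, hD₂.2, conjTranspose_smul]
    calc (D₂ (h * g))ᴴ * D₂ h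
        = (ω h g * star (ω h g)) • (D₂ (h * g))ᴴ * D₂ h := by
          rw [mul_comm, hω.star_mul_self, one_smul]
      _ = ω h g • ((D₂ g)ᴴ * ((D₂ h)ᴴ * D₂ h)) := by
          rw [← Matrix.mul_assoc, h1]
          simp only [Matrix.smul_mul, smul_smul]
      _ = ω h g • (D₂ g)ᴴ := by rw [hD₂.conjTranspose_mul_self, Matrix.mul_one]
  simp only [Equiv.coe_mulLeft]
  rw [← Matrix.mul_assoc, ← Matrix.mul_assoc, hD₁.2, Matrix.mul_assoc _ _ (D₂ h), hstar]
  simp only [Matrix.smul_mul, Matrix.mul_smul]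

variable [Fintype G]

theorem IsUnitaryProjRep.sum_mul_star_apply (hω : IsCocycle ω) (hD : IsUnitaryProjRep ω D)
    (hirr : IsIrred D) (i j k l : Fin d) :
    ∑ g, D g i j * star (D g k l) =
      if i = k ∧ j = l then (Fintype.card G : ℂ) / d else 0 := by
  obtain ⟨c, hc⟩ :=
    hirr.exists_eq_smul_one_of_commute (hD.intertwines_sum hω hD (single j l 1))
  have hentry : (∑ g, D g * single j l (1 : ℂ) * (D g)ᴴ) i k =
      ∑ g, D g i j * star (D g k l) := by
    simp [Matrix.sum_apply, mul_single_one_mul_apply]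
  have htrace : c * d = Fintype.card G * if j = l then 1 else 0 := by
    calc c * d = trace (∑ g, D g * single j l (1 : ℂ) * (D g)ᴴ) := by simp [hc]
      _ = ∑ _g : G, trace (single j l (1 : ℂ)) := by
          refine (trace_sum _ _).trans (Finset.sum_congr rfl fun g _ => ?_)
          rw [trace_mul_cycle, hD.conjTranspose_mul_self, Matrix.one_mul]
      _ = _ := by split_ifs with hjl <;> simp [hjl]
  have hd : (d : ℂ) ≠ 0 := Nat.cast_ne_zero.mpr (Fin.pos i).ne'
  rw [← hentry, hc, Matrix.smul_apply, one_apply, (eq_div_iff hd).mpr htrace]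
  by_cases hik : i = k <;> by_cases hjl : j = l <;> simp [hik, hjl]

theorem sum_mul_star_apply_eq_zero_of_not_projEquiv (hω : IsCocycle ω)
    (hD₁ : IsUnitaryProjRep ω D₁) (hD₂ : IsUnitaryProjRep ω D₂) (hirr₁ : IsIrred D₁)
    (hirr₂ : IsIrred D₂) (hne : ¬ ProjEquiv D₁ D₂) (i j : Fin d₁) (k l : Fin d₂) :
    ∑ g, D₁ g i j * star (D₂ g k l) = 0 := by
  have hT := (eq_zero_or_projEquiv_of_intertwines hirr₁ hirr₂
    (hD₁.intertwines_sum hω hD₂ (single j l 1))).resolve_right hne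
  simpa [Matrix.sum_apply, mul_single_one_mul_apply] using congrFun (congrFun hT i) k

end MatrixRep

section Family

variable [Group G] {A : Type} {dfam : A → ℕ}

def matrixCoeff (Dfam : ∀ α, G → Matrix (Fin (dfam α)) (Fin (dfam α)) ℂ)
    (s : Σ α, Fin (dfam α) × Fin (dfam α)) : G → ℂ :=
  fun g => Dfam s.1 g s.2.1 s.2.2

theorem linearIndependent_matrixCoeff [Fintype G] (hω : IsCocycle ω)
    {Dfam : ∀ α, G → Matrix (Fin (dfam α)) (Fin (dfam α)) ℂ}
    (hrep : ∀ α, IsUnitaryProjRep ω (Dfam α)) (hirr : ∀ α, IsIrred (Dfam α))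
    (hinequiv : ∀ α β, α ≠ β → ¬ ProjEquiv (Dfam α) (Dfam β)) :
    LinearIndependent ℂ (matrixCoeff Dfam) := by
  let v : (Σ α, Fin (dfam α) × Fin (dfam α)) → EuclideanSpace ℂ G :=
    fun s => WithLp.toLp 2 (matrixCoeff Dfam s)
  have hinner : ∀ s t, ⟪v s, v t⟫_ℂ =
      ∑ g, matrixCoeff Dfam t g * star (matrixCoeff Dfam s g) := fun s t =>
    EuclideanSpace.inner_eq_star_dotProduct _ _
  have hv : LinearIndependent ℂ v := by
    refine linearIndependent_of_ne_zero_of_inner_eq_zero (fun ⟨α, i, j⟩ hs => ?_) ?_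
    · have hself := hinner ⟨α, i, j⟩ ⟨α, i, j⟩
      rw [hs, inner_zero_left] at hself
      have hd : (dfam α : ℂ) ≠ 0 := Nat.cast_ne_zero.mpr (Fin.pos i).ne'
      simp only [matrixCoeff, (hrep α).sum_mul_star_apply hω (hirr α), and_self,
        if_true] at hself
      exact div_ne_zero (Nat.cast_ne_zero.mpr Fintype.card_ne_zero) hd hself.symm
    · rintro ⟨α, i, j⟩ ⟨β, k, l⟩ hne
      rw [hinner]
      by_cases hαβ : α = β
      · subst hαβ
        simp only [matrixCoeff]
        rw [(hrep α).sum_mul_star_apply hω (hirr α), if_neg]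
        rintro ⟨rfl, rfl⟩
        exact hne rfl
      · exact sum_mul_star_apply_eq_zero_of_not_projEquiv hω (hrep β) (hrep α) (hirr β)
          (hirr α) (hinequiv β α (Ne.symm hαβ)) k l i j
  exact hv.map' (WithLp.linearEquiv 2 ℂ (G → ℂ)).toLinearMap (LinearEquiv.ker _)

theorem mul_mul_apply_mem_span {ι n : Type*} [Fintype n] (D : ι → Matrix n n ℂ)
    (S T : Matrix n n ℂ) (i j : n) :
    (fun g => (S * D g * T) i j) ∈
      span ℂ (Set.range fun p : n × n => fun g => D g p.1 p.2) := by
  have hexp : (fun g => (S * D g * T) i j)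
      = ∑ u, ∑ v, (S i u * T v j) • fun g => D g u v := by
    ext g
    simp only [Matrix.mul_apply, Finset.sum_mul, Finset.sum_apply, Pi.smul_apply, smul_eq_mul]
    rw [Finset.sum_comm]
    exact Finset.sum_congr rfl fun v _ => Finset.sum_congr rfl fun u _ => by ring
  rw [hexp]
  exact sum_mem fun u _ => sum_mem fun v _ => smul_mem _ _ (subset_span ⟨(u, v), rfl⟩)

theorem matrixCoeff_mem_span_of_projEquiv
    {Dfam : ∀ α, G → Matrix (Fin (dfam α)) (Fin (dfam α)) ℂ} {d : ℕ}
    {D : G → Matrix (Fin d) (Fin d) ℂ} {α : A} (h : ProjEquiv D (Dfam α)) (i j : Fin d) :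
    (fun g => D g i j) ∈ span ℂ (Set.range (matrixCoeff Dfam)) := by
  obtain ⟨rfl, S, hS, hDS⟩ := h
  have hD : ∀ g, D g = S * Dfam α g * S⁻¹ := fun g => by
    simp [hDS, Matrix.mul_assoc, mul_nonsing_inv _ hS, mul_nonsing_inv_cancel_left _ _ hS]
  simp_rw [hD]
  refine span_mono ?_ (mul_mul_apply_mem_span (Dfam α) S S⁻¹ i j)
  rintro _ ⟨p, rfl⟩
  exact ⟨⟨α, p⟩, rfl⟩

end Family

section Action

variable {E : Type*} [NormedAddCommGroup E] [InnerProductSpace ℂ E]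

structure IsUnitaryProjAction [Group G] (ω : G → G → ℂ) (ρ : G → Module.End ℂ E) : Prop where
  inner_map_map : ∀ g x y, ⟪ρ g x, ρ g y⟫_ℂ = ⟪x, y⟫_ℂ
  map_mul : ∀ g h, ρ g * ρ h = ω g h • ρ (g * h)

theorem orthogonal_mem_invtSubmodule_of_inner_map_map [FiniteDimensional ℂ E]
    {T : Module.End ℂ E} (hT : ∀ x y, ⟪T x, T y⟫_ℂ = ⟪x, y⟫_ℂ) {q : Submodule ℂ E}
    (hq : q ∈ T.invtSubmodule) : qᗮ ∈ T.invtSubmodule := by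
  intro x hx u hu
  have hinj : Function.Injective (T.restrict hq) := fun a b hab =>
    Subtype.ext ((T.isometryOfInner hT).injective (congrArg Subtype.val hab))
  obtain ⟨u', hu'⟩ := LinearMap.injective_iff_surjective.mp hinj ⟨u, hu⟩
  have hTu : T u' = u := congrArg Subtype.val hu'
  rw [← hTu, hT]
  exact hx u' u'.2

variable [FiniteDimensional ℂ E] {ρ : G → Module.End ℂ E} {p : Submodule ℂ E}

def restrictMatrix (ρ : G → Module.End ℂ E) (hp : ∀ g, p ∈ (ρ g).invtSubmodule) (g : G) :
    Matrix (Fin (Module.finrank ℂ p)) (Fin (Module.finrank ℂ p)) ℂ :=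
  LinearMap.toMatrix (stdOrthonormalBasis ℂ p).toBasis (stdOrthonormalBasis ℂ p).toBasis
    ((ρ g).restrict (hp g))

theorem IsUnitaryProjAction.isUnitaryProjRep_restrictMatrix [Group G]
    (hρ : IsUnitaryProjAction ω ρ) (hp : ∀ g, p ∈ (ρ g).invtSubmodule) :
    IsUnitaryProjRep ω (restrictMatrix ρ hp) := by
  refine ⟨fun g => ?_, fun g h => ?_⟩
  · exact LinearIsometryEquiv.toMatrix_mem_unitaryGroup
      ((((ρ g).restrict (hp g)).isometryOfInner fun x y => hρ.inner_map_map g x y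
        ).toLinearIsometryEquiv rfl) _ _
  · have hmul : (ρ g).restrict (hp g) * (ρ h).restrict (hp h)
        = ω g h • (ρ (g * h)).restrict (hp (g * h)) := by
      ext x
      change ρ g (ρ h x) = ω g h • ρ (g * h) x
      rw [← Module.End.mul_apply, hρ.map_mul, LinearMap.smul_apply]
    rw [restrictMatrix, restrictMatrix, ← LinearMap.toMatrix_mul, hmul, _root_.map_smul]
    rfl

theorem isIrred_restrictMatrix [Group G] (hp : ∀ g, p ∈ (ρ g).invtSubmodule)
    (hmin : ∀ q ≤ p, (∀ g, q ∈ (ρ g).invtSubmodule) → q = ⊥ ∨ q = p) :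
    IsIrred (restrictMatrix ρ hp) := by
  intro s hs
  set b := (stdOrthonormalBasis ℂ p).toBasis
  let f : (Fin (Module.finrank ℂ p) → ℂ) →ₗ[ℂ] E := p.subtype ∘ₗ b.equivFun.symm.toLinearMap
  have hf : Function.Injective f := p.injective_subtype.comp b.equivFun.symm.injective
  have hmap : ∀ g c, ρ g (f c) = f (restrictMatrix ρ hp g *ᵥ c) := by
    intro g c
    have hrepr : restrictMatrix ρ hp g *ᵥ c =
        b.equivFun ((ρ g).restrict (hp g) (b.equivFun.symm c)) := by
      have h := LinearMap.toMatrix_mulVec_repr b b ((ρ g).restrict (hp g)) (b.equivFun.symm c)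
      simp only [← Module.Basis.equivFun_apply, LinearEquiv.apply_symm_apply] at h
      exact h
    simp only [f, LinearMap.comp_apply, LinearEquiv.coe_coe, hrepr, LinearEquiv.symm_apply_apply,
      subtype_apply]
    rfl
  have hrange : LinearMap.range f = p := by
    rw [LinearMap.range_comp_of_range_eq_top _ (LinearEquiv.range _), range_subtype]
  have hinv : ∀ g, s.map f ∈ (ρ g).invtSubmodule := by
    rintro g _ ⟨c, hc, rfl⟩
    exact ⟨_, hs g c hc, (hmap g c).symm⟩
  refine (hmin (s.map f) (LinearMap.map_le_range.trans hrange.le) hinv).imp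
    (fun h => map_injective_of_injective hf ?_) (fun h => map_injective_of_injective hf ?_)
  · exact h.trans (map_bot f).symm
  · exact h.trans (hrange.symm.trans (map_top f).symm)

theorem inner_map_eq_sum_restrictMatrix (hp : ∀ g, p ∈ (ρ g).invtSubmodule) (w : E) (y : p)
    (g : G) :
    ⟪w, ρ g y⟫_ℂ = ∑ k, ∑ l, ⟪w, (stdOrthonormalBasis ℂ p k : E)⟫_ℂ *
      restrictMatrix ρ hp g k l * ⟪(stdOrthonormalBasis ℂ p l : E), y⟫_ℂ := by
  set b := stdOrthonormalBasis ℂ p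
  have hcoord : ∀ k, b.repr ((ρ g).restrict (hp g) y) k
      = ∑ l, restrictMatrix ρ hp g k l * ⟪(b l : E), y⟫_ℂ := by
    intro k
    have h := congrFun
      (LinearMap.toMatrix_mulVec_repr b.toBasis b.toBasis ((ρ g).restrict (hp g)) y) k
    simpa [mulVec, dotProduct, restrictMatrix, b.repr_apply_apply] using h.symm
  calc ⟪w, ρ g y⟫_ℂ
        = ⟪w, ((∑ k, b.repr ((ρ g).restrict (hp g) y) k • b k : p) : E)⟫_ℂ := by
          rw [b.sum_repr]; rfl
    _ = _ := by
          simp only [coe_sum, coe_smul, inner_sum, inner_smul_right, hcoord, Finset.sum_mul]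
          exact Finset.sum_congr rfl fun k _ => Finset.sum_congr rfl fun l _ => by ring

end Action

section Completeness

variable [Group G] {E : Type*} [NormedAddCommGroup E] [InnerProductSpace ℂ E]
  [FiniteDimensional ℂ E] {ρ : G → Module.End ℂ E}

def ContainsIrrepCoeffs (ω : G → G → ℂ) (W : Submodule ℂ (G → ℂ)) : Prop :=
  ∀ (d : ℕ) (D : G → Matrix (Fin d) (Fin d) ℂ), IsUnitaryProjRep ω D → IsIrred D →
    ∀ i j, (fun g => D g i j) ∈ W

variable {W : Submodule ℂ (G → ℂ)}

theorem ContainsIrrepCoeffs.inner_map_mem_of_minimal (hW : ContainsIrrepCoeffs ω W)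
    (hρ : IsUnitaryProjAction ω ρ) {p : Submodule ℂ E} (hp : ∀ g, p ∈ (ρ g).invtSubmodule)
    (hmin : ∀ q ≤ p, (∀ g, q ∈ (ρ g).invtSubmodule) → q = ⊥ ∨ q = p) {v : E} (hv : v ∈ p)
    (w : E) : (fun g => ⟪w, ρ g v⟫_ℂ) ∈ W := by
  set b := stdOrthonormalBasis ℂ p
  have hexp : (fun g => ⟪w, ρ g v⟫_ℂ)
      = ∑ k, ∑ l, (⟪w, (b k : E)⟫_ℂ * ⟪(b l : E), v⟫_ℂ) •
          fun g => restrictMatrix ρ hp g k l := by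
    ext g
    simp only [Finset.sum_apply, Pi.smul_apply, smul_eq_mul]
    rw [inner_map_eq_sum_restrictMatrix hp w ⟨v, hv⟩ g]
    exact Finset.sum_congr rfl fun k _ => Finset.sum_congr rfl fun l _ => by ring
  rw [hexp]
  exact sum_mem fun k _ => sum_mem fun l _ => smul_mem _ _ <|
    hW _ _ (hρ.isUnitaryProjRep_restrictMatrix hp) (isIrred_restrictMatrix hp hmin) k l

theorem ContainsIrrepCoeffs.inner_map_mem (hW : ContainsIrrepCoeffs ω W)
    (hρ : IsUnitaryProjAction ω ρ) (v w : E) : (fun g => ⟪w, ρ g v⟫_ℂ) ∈ W := by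
  suffices h : ∀ n, ∀ p : Submodule ℂ E, Module.finrank ℂ p = n →
      (∀ g, p ∈ (ρ g).invtSubmodule) → ∀ v ∈ p, (fun g => ⟪w, ρ g v⟫_ℂ) ∈ W from
    h _ ⊤ rfl (fun g => Module.End.invtSubmodule.top_mem _) v mem_top
  intro n
  induction n using Nat.strong_induction_on with
  | _ n ih =>
  intro p hpn hp v hv
  by_cases hmin : ∀ q ≤ p, (∀ g, q ∈ (ρ g).invtSubmodule) → q = ⊥ ∨ q = p
  · exact hW.inner_map_mem_of_minimal hρ hp hmin hv w
  push Not at hmin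
  obtain ⟨q, hqp, hq, hq_bot, hq_p⟩ := hmin
  -- `p` splits into the invariant subspaces `q` and `p ⊓ qᗮ`, both smaller than `p`
  set r := p ⊓ qᗮ
  have hr : ∀ g, r ∈ (ρ g).invtSubmodule := fun g =>
    Module.End.invtSubmodule.inf_mem (hp g)
      (orthogonal_mem_invtSubmodule_of_inner_map_map (hρ.inner_map_map g) (hq g))
  have hrp : r < p := by
    refine lt_of_le_of_ne inf_le_left fun hrp => hq_bot (eq_bot_iff.mpr ?_)
    exact (le_inf le_rfl (hqp.trans (hrp ▸ inf_le_right))).trans (inf_orthogonal_eq_bot q).le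
  obtain ⟨v₁, hv₁, v₂, hv₂, rfl⟩ := q.exists_add_mem_mem_orthogonal v
  have hv₂r : v₂ ∈ r := ⟨by simpa using sub_mem hv (hqp hv₁), hv₂⟩
  have hsplit : (fun g => ⟪w, ρ g (v₁ + v₂)⟫_ℂ)
      = (fun g => ⟪w, ρ g v₁⟫_ℂ) + fun g => ⟪w, ρ g v₂⟫_ℂ := by
    ext g
    simp
  rw [hsplit]
  exact add_mem
    (ih _ (hpn ▸ finrank_lt_finrank_of_lt (lt_of_le_of_ne hqp hq_p)) q rfl hq v₁ hv₁)
    (ih _ (hpn ▸ finrank_lt_finrank_of_lt hrp) r rfl hr v₂ hv₂r)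

end Completeness

section Regular

variable [Group G]

theorem isUnitaryProjAction_toEuclideanLin {ι : Type*} [Fintype ι] [DecidableEq ι]
    {D : G → Matrix ι ι ℂ} (hU : ∀ g, D g ∈ unitaryGroup ι ℂ)
    (hmul : ∀ g h, D g * D h = ω g h • D (g * h)) :
    IsUnitaryProjAction ω fun g => toEuclideanLin (D g) where
  inner_map_map g x y := by
    rw [← LinearMap.adjoint_inner_right,
      ← toEuclideanLin_conjTranspose_eq_adjoint, ← LinearMap.comp_apply, ← toLpLin_mul_same,
      show (D g)ᴴ * D g = 1 from (Unitary.mem_iff.mp (hU g)).1, toLpLin_one, LinearMap.id_apply]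
  map_mul g h := by rw [Module.End.mul_eq_comp, ← toLpLin_mul_same, hmul, map_smul]

variable [Fintype G] [DecidableEq G]

theorem projRegRep_mul (hω : IsCocycle ω) (g h : G) :
    projRegRep ω g * projRegRep ω h = ω g h • projRegRep ω (g * h) := by
  ext x y
  rw [Matrix.mul_apply, Finset.sum_eq_single (h * y) (fun z _ hz => by simp [projRegRep, hz])
    (by simp)]
  simp only [projRegRep, if_true, Matrix.smul_apply, smul_eq_mul, mul_assoc]
  split_ifs
  · exact (hω.2.2.2 g h y).symm
  · simp

theorem projRegRep_mem_unitaryGroup (hω : IsCocycle ω) (g : G) :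
    projRegRep ω g ∈ unitaryGroup G ℂ := by
  rw [mem_unitaryGroup_iff']
  ext y y'
  rw [Matrix.mul_apply, Finset.sum_eq_single (g * y) (fun z _ hz => by simp [projRegRep, hz])
    (by simp)]
  by_cases hyy : y = y'
  · subst hyy
    simpa [projRegRep] using hω.star_mul_self g y
  · simp [projRegRep, hyy]

theorem ContainsIrrepCoeffs.eq_top (hω : IsCocycle ω) {W : Submodule ℂ (G → ℂ)}
    (hW : ContainsIrrepCoeffs ω W) : W = ⊤ := by
  have hρ := isUnitaryProjAction_toEuclideanLin (projRegRep_mem_unitaryGroup hω)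
    (projRegRep_mul hω)
  rw [eq_top_iff, ← (Pi.basisFun ℂ G).span_eq, span_le]
  rintro _ ⟨h, rfl⟩
  rw [SetLike.mem_coe]
  -- the coefficient `⟨δ_h, R(g) δ_1⟩` of the regular representation `R` is `δ_h(g)`
  convert hW.inner_map_mem hρ (EuclideanSpace.single 1 1) (EuclideanSpace.single h 1) using 1
  ext g
  simp [EuclideanSpace.inner_single_left, toLpLin_apply, projRegRep,
    Pi.single_apply, hω.2.2.1, eq_comm]

end Regular

/-- dimension equation for projective irreps. -/
theorem projective_dimension_equation
    {G : Type} [Group G] [Fintype G]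
    (ω : G → G → ℂ) (hω : IsCocycle ω)
    {A : Type} [Fintype A]
    (dfam : A → ℕ)
    (Dfam : ∀ α : A, G → Matrix (Fin (dfam α)) (Fin (dfam α)) ℂ)
    (hrep : ∀ α, IsUnitaryProjRep ω (Dfam α))
    (hirr : ∀ α, IsIrred (Dfam α))
    (hinequiv : ∀ α β, α ≠ β → ¬ ProjEquiv (Dfam α) (Dfam β))
    (hcomplete : ∀ (d : ℕ) (D : G → Matrix (Fin d) (Fin d) ℂ),
      IsUnitaryProjRep ω D → IsIrred D → ∃ α, ProjEquiv D (Dfam α)) :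
    ∑ α : A, (dfam α) ^ 2 = Fintype.card G := by
  classical
  have hspan : span ℂ (Set.range (matrixCoeff Dfam)) = ⊤ :=
    ContainsIrrepCoeffs.eq_top hω fun d D hD hDirr i j =>
      (hcomplete d D hD hDirr).elim fun _ hα => matrixCoeff_mem_span_of_projEquiv hα i j
  calc ∑ α, dfam α ^ 2 = Fintype.card (Σ α, Fin (dfam α) × Fin (dfam α)) := by simp [sq]
    _ = Module.finrank ℂ (span ℂ (Set.range (matrixCoeff Dfam))) :=
        (finrank_span_eq_card (linearIndependent_matrixCoeff hω hrep hirr hinequiv)).symm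
    _ = Fintype.card G := by rw [hspan, finrank_top, Module.finrank_fintype_fun_eq_card]
end
end

section
/- Symmetry fractionalization by the Ω gate: let G be a finite group, ω a normalized unitary 2-cocycle on G, M g the regular representation matrices, 𝒟 g the ω-projective regular representation matrices, and Ω ∈ Matrix (G × G) (G × G) ℂ the diagonal matrix whose diagonal entry at index (g_l, g_r) is ω g_r (g_r⁻¹ * g_l). Then Ω is unitary and Ω * ((M g) ⊗ (M g)) * Ωᴴ = (𝒟 g) ⊗ conj(𝒟 g) for every g ∈ G, where conj denotes entrywise complex conjugation. -/
open Matrix Kronecker BigOperators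

noncomputable section

/-!
`Ω` is diagonal with entries of modulus one, so conjugating the permutation matrix
`M g ⊗ M g` by it only rescales its nonzero entries: the one at `((g b₁, g b₂), (b₁, b₂))`
becomes `ω (g b₂) (b₂⁻¹ b₁) · conj (ω b₂ (b₂⁻¹ b₁))`. Since `conj ω = ω⁻¹`, the cocycle
identity at `(g, b₂, b₂⁻¹ b₁)` turns this into `ω g b₁ · conj (ω g b₂)`, the corresponding
entry of `𝒟 g ⊗ conj (𝒟 g)`.
-/

namespace Matrix

variable {n : Type*} [Fintype n] [DecidableEq n]

theorem diagonal_mem_unitaryGroup_of_norm_eq_one {d : n → ℂ} (hd : ∀ i, ‖d i‖ = 1) :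
    diagonal d ∈ unitaryGroup n ℂ := by
  rw [mem_unitaryGroup_iff, star_eq_conjTranspose, diagonal_conjTranspose,
    diagonal_mul_diagonal, ← diagonal_one]
  congr 1
  funext i
  simp [Complex.mul_conj', hd]

theorem diagonal_mul_mul_conjTranspose_diagonal_apply {α : Type*} [Semiring α] [StarRing α]
    (d : n → α) (A : Matrix n n α) (i j : n) :
    (diagonal d * A * (diagonal d)ᴴ) i j = d i * A i j * star (d j) := by
  rw [diagonal_conjTranspose, mul_diagonal, diagonal_mul]
  rfl

end Matrix

theorem IsCocycle.mul_conj_eq_mul_conj {G : Type} [Group G] {ω : G → G → ℂ}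
    (hω : IsCocycle ω) (g a b : G) :
    ω (g * b) (b⁻¹ * a) * starRingEnd ℂ (ω b (b⁻¹ * a)) = ω g a * starRingEnd ℂ (ω g b) := by
  obtain ⟨hnorm, -, -, hcoc⟩ := hω
  have hne : ∀ x y, ω x y ≠ 0 := fun x y => norm_ne_zero_iff.mp (by simp [hnorm])
  have hcoc' := hcoc g b (b⁻¹ * a)
  rw [mul_inv_cancel_left] at hcoc'
  rw [← Complex.inv_eq_conj (hnorm _ _), ← Complex.inv_eq_conj (hnorm _ _)]
  field_simp [hne]
  linear_combination hcoc'

/-- symmetry fractionalization by the `Ω` gate. -/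
theorem omega_gate_fractionalization
    {G : Type} [Group G] [Fintype G] [DecidableEq G]
    (ω : G → G → ℂ) (hω : IsCocycle ω)
    (Ω : Matrix (G × G) (G × G) ℂ)
    (hΩ : Ω = Matrix.diagonal (fun p : G × G => ω p.2 (p.2⁻¹ * p.1))) :
    Ω ∈ Matrix.unitaryGroup (G × G) ℂ ∧
    ∀ g : G, Ω * (regRep G g ⊗ₖ regRep G g) * Ωᴴ
      = projRegRep ω g ⊗ₖ (projRegRep ω g).map (starRingEnd ℂ) := by
  subst hΩ
  refine ⟨diagonal_mem_unitaryGroup_of_norm_eq_one fun _ => hω.1 _ _, fun g => ?_⟩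
  ext ⟨a₁, a₂⟩ ⟨b₁, b₂⟩
  rw [diagonal_mul_mul_conjTranspose_diagonal_apply]
  simp only [kronecker_apply, regRep, projRegRep, map_apply]
  by_cases h₁ : a₁ = g * b₁ <;> by_cases h₂ : a₂ = g * b₂
  · subst h₁ h₂
    simpa [mul_assoc] using hω.mul_conj_eq_mul_conj g b₁ b₂
  all_goals simp [h₁, h₂]
end
end

section
/- The Ω gate commutes with time reversal: let G be a finite group, σ : G → G a group automorphism with σ ∘ σ = id, and ω a normalized unitary 2-cocycle on G satisfying ω g h * ω (σ g) (σ h) = 1 for all g, h ∈ G. Let P_σ ∈ Matrix G G ℂ be the permutation matrix with (P_σ)_{h,h'} = 1 if h = σ h' and 0 otherwise, and let Ω ∈ Matrix (G × G) (G × G) ℂ be the diagonal matrix whose diagonal entry at (g_l, g_r) is ω g_r (g_r⁻¹ * g_l). Then (P_σ ⊗ P_σ) * conj(Ω) * (P_σ ⊗ P_σ) = Ω, where conj denotes entrywise complex conjugation. -/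
/-!
`Pσ ⊗ Pσ` is the permutation matrix of the involution `σ × σ` of `G × G`, so conjugating the
diagonal matrix `conj Ω` by it just relabels the diagonal along `σ × σ`. Since `σ` is a
homomorphism, the relabelled entry is `conj (ω (σ g) (σ h))` with `g = g_r`, `h = g_r⁻¹ g_l`,
and as `|ω| = 1` this is `ω (σ g) (σ h)⁻¹ = ω g h`.
-/

open Matrix Kronecker BigOperators

noncomputable section

namespace Equiv.Perm

variable {n R : Type*} [DecidableEq n]

theorem permMatrix_toPerm [Zero R] [One R] {f : n → n} (hf : Function.Involutive f) :
    (Function.Involutive.toPerm f hf).permMatrix R = fun i j => if i = f j then 1 else 0 := by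
  ext i j
  simp only [PEquiv.toMatrix_apply, Function.Involutive.coe_toPerm, toPEquiv_apply,
    Option.mem_def, Option.some.injEq, hf.eq_iff]

theorem permMatrix_kronecker_permMatrix {m : Type*} [DecidableEq m] [MulZeroOneClass R]
    (e : Perm n) (e' : Perm m) :
    e.permMatrix R ⊗ₖ e'.permMatrix R = permMatrix R (e.prodCongr e') := by
  ext ⟨i, i'⟩ ⟨j, j'⟩
  simp only [kroneckerMap_apply, PEquiv.toMatrix_apply, toPEquiv_apply, Option.mem_def,
    Option.some.injEq, prodCongr_apply, Prod.map_apply, Prod.mk.injEq, ite_zero_mul_ite_zero,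
    one_mul]

theorem permMatrix_mul_diagonal_mul_permMatrix [Fintype n] [NonAssocSemiring R]
    (e : Perm n) (he : Function.Involutive e) (d : n → R) :
    e.permMatrix R * diagonal d * e.permMatrix R = diagonal (d ∘ e) := by
  rw [PEquiv.toMatrix_toPEquiv_mul, PEquiv.mul_toMatrix_toPEquiv, submatrix_submatrix,
    Function.Involutive.symm_eq_self_of_involutive e he,
    Function.comp_id, Function.id_comp, submatrix_diagonal_equiv]

end Equiv.Perm

theorem Complex.conj_eq_of_mul_eq_one {z w : ℂ} (hw : ‖w‖ = 1) (h : z * w = 1) :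
    starRingEnd ℂ w = z := by
  rw [← Complex.inv_eq_conj hw]
  exact (eq_inv_of_mul_eq_one_left h).symm

/-- the `Ω` gate commutes with time reversal. -/
theorem omega_gate_time_reversal_invariant
    {G : Type} [Group G] [Fintype G] [DecidableEq G]
    (σ : G →* G) (hσ : ∀ g, σ (σ g) = g)
    (ω : G → G → ℂ) (hω : IsCocycle ω)
    (hωσ : ∀ g h, ω g h * ω (σ g) (σ h) = 1)
    (Pσ : Matrix G G ℂ)
    (hPσ : Pσ = fun h h' => if h = σ h' then 1 else 0)
    (Ω : Matrix (G × G) (G × G) ℂ)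
    (hΩ : Ω = Matrix.diagonal (fun p : G × G => ω p.2 (p.2⁻¹ * p.1))) :
    (Pσ ⊗ₖ Pσ) * Ω.map (starRingEnd ℂ) * (Pσ ⊗ₖ Pσ) = Ω := by
  replace hσ : Function.Involutive σ := hσ
  rw [hPσ, ← Equiv.Perm.permMatrix_toPerm hσ, Equiv.Perm.permMatrix_kronecker_permMatrix, hΩ,
    diagonal_map (map_zero _), Equiv.Perm.permMatrix_mul_diagonal_mul_permMatrix _ (hσ.prodMap hσ)]
  congr 1
  ext ⟨gl, gr⟩
  simp only [Function.comp_apply, Equiv.prodCongr_apply, Prod.map_apply,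
    Function.Involutive.coe_toPerm]
  rw [← map_inv, ← map_mul]
  exact Complex.conj_eq_of_mul_eq_one (hω.1 _ _) (hωσ _ _)
end
end

section
/- Vanishing indicator for complex-type irreps: let G be a finite group, σ : G → G a group automorphism with σ ∘ σ = id, and ω : G → G → ℂ with |ω g h| = 1 satisfying ω g h * ω (σ g) (σ h) = 1 for all g, h ∈ G. Let D be an irreducible unitary ω-projective representation of G of dimension d such that D⋆, defined by D⋆ g = conj(D (σ g)), is not equivalent to D. Then the matrix X = (1/|G|) ∑_{g ∈ G} ω (σ g) g • D (σ g * g) is zero; in particular the indicator ι(D) = (1/|G|) ∑_{g ∈ G} ω (σ g) g · Tr(D (σ g * g)) equals 0. -/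
/-! For every matrix `A`, the twisted average `∑ g, D (σ g)ᵀ * A * D g` intertwines `D` with `D⋆`:
unitarity and `ω g h * ω (σ g) (σ h) = 1` give `D⋆ h * D (σ (g * h))ᵀ = ω g h • D (σ g)ᵀ`, which
is exactly what reindexing the sum by `g ↦ g * h` needs. Since `D` is irreducible and `D⋆` is not
equivalent to it, Schur's lemma makes every such average vanish. Taking `A` a matrix unit and
contracting indices gives `∑ g, D (σ g) * D g = 0`, and `D (σ g) * D g = ω (σ g) g • D (σ g * g)`.
-/

open Matrix Kronecker BigOperators

noncomputable section

open Finset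

theorem Matrix.map_star_mul_transpose_of_mem_unitaryGroup {n R : Type*} [Fintype n]
    [DecidableEq n] [CommRing R] [StarRing R] {U : Matrix n n R}
    (hU : U ∈ Matrix.unitaryGroup n R) : U.map star * Uᵀ = 1 := by
  rw [← conjTranspose_transpose, ← transpose_mul, ← star_eq_conjTranspose,
    Matrix.mem_unitaryGroup_iff.mp hU, transpose_one]

theorem Matrix.sum_mul_eq_zero_of_forall_sum_transpose_mul_mul_eq_zero {ι m n k R : Type*}
    [Fintype ι] [Fintype m] [Fintype n] [DecidableEq m] [DecidableEq n] [CommSemiring R]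
    {P : ι → Matrix m n R} {Q : ι → Matrix n k R}
    (h : ∀ A : Matrix m n R, ∑ i, (P i)ᵀ * A * Q i = 0) : ∑ i, P i * Q i = 0 := by
  ext a b
  have hentry : ∀ l i, ((P i)ᵀ * single a l (1 : R) * Q i) l b = P i a l * Q i l b := by
    intro l i
    rw [mul_apply, sum_eq_single l (fun x _ hx => by rw [mul_single_apply_of_ne _ _ _ _ _ hx,
      zero_mul]) (by simp), mul_single_apply_same, transpose_apply, mul_one]
  simp only [sum_apply, mul_apply, zero_apply]
  rw [sum_comm]
  refine sum_eq_zero fun l _ => ?_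
  simpa [sum_apply, hentry] using congr_fun₂ (h (single a l (1 : R))) l b

theorem sum_mul_mul_intertwines {G : Type*} [Group G] [Fintype G] {m n k R : Type*}
    [Fintype m] [Fintype n] [Fintype k] [CommSemiring R] {ω : G → G → R}
    {D₁ : G → Matrix m m R} {E : G → Matrix m n R} {D₂ : G → Matrix k k R}
    (hD₂ : ∀ g h, D₂ g * D₂ h = ω g h • D₂ (g * h))
    (hE : ∀ g h, D₁ h * E (g * h) = ω g h • E g) (A : Matrix n k R) (h : G) :
    D₁ h * ∑ g, E g * A * D₂ g = (∑ g, E g * A * D₂ g) * D₂ h := by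
  rw [Matrix.mul_sum, Matrix.sum_mul]
  refine (Fintype.sum_equiv (Equiv.mulRight h) _ _ fun g => ?_).symm
  calc E g * A * D₂ g * D₂ h = (ω g h • E g) * A * D₂ (g * h) := by
        rw [Matrix.mul_assoc, hD₂, Matrix.mul_smul, smul_mul, smul_mul]
    _ = D₁ h * (E (g * h) * A * D₂ (g * h)) := by
        rw [← hE, Matrix.mul_assoc, Matrix.mul_assoc, Matrix.mul_assoc]

variable {G : Type} [Group G]

theorem projEquiv_of_intertwines_s13 {d : ℕ} {D₁ D₂ : G → Matrix (Fin d) (Fin d) ℂ}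
    {T : Matrix (Fin d) (Fin d) ℂ} (hT : IsUnit T.det) (h : ∀ g, D₁ g * T = T * D₂ g) :
    ProjEquiv D₁ D₂ :=
  ⟨rfl, T, hT, fun g => by
    rw [finCongr_refl, reindex_refl_refl, Matrix.mul_assoc, h, nonsing_inv_mul_cancel_left _ _ hT]⟩

theorem IsIrred.eq_zero_or_isUnit_det_of_intertwines {d : ℕ}
    {D₁ D₂ : G → Matrix (Fin d) (Fin d) ℂ} (hirr : IsIrred D₂) {T : Matrix (Fin d) (Fin d) ℂ}
    (h : ∀ g, D₁ g * T = T * D₂ g) : T = 0 ∨ IsUnit T.det := by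
  have hinv : ∀ g, ∀ v ∈ LinearMap.ker T.mulVecLin, D₂ g *ᵥ v ∈ LinearMap.ker T.mulVecLin := by
    intro g v hv
    rw [LinearMap.mem_ker, mulVecLin_apply] at hv ⊢
    rw [mulVec_mulVec, ← h, ← mulVec_mulVec, hv, mulVec_zero]
  rcases hirr _ hinv with hbot | htop
  · right
    rw [← isUnit_iff_isUnit_det, ← mulVec_injective_iff_isUnit, ← coe_mulVecLin]
    exact LinearMap.ker_eq_bot.mp hbot
  · left
    rw [← toLin'.map_eq_zero_iff, toLin'_apply']
    exact LinearMap.ker_eq_top.mp htop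

theorem IsIrred.eq_zero_of_intertwines_of_not_projEquiv {d : ℕ}
    {D₁ D₂ : G → Matrix (Fin d) (Fin d) ℂ} (hirr : IsIrred D₂) (hne : ¬ ProjEquiv D₁ D₂)
    {T : Matrix (Fin d) (Fin d) ℂ} (h : ∀ g, D₁ g * T = T * D₂ g) : T = 0 :=
  (hirr.eq_zero_or_isUnit_det_of_intertwines h).resolve_right
    fun hT => hne (projEquiv_of_intertwines_s13 hT h)

/-- The representation `D⋆` of the paper. -/
def starTwist (σ : G →* G) {d : ℕ} (D : G → Matrix (Fin d) (Fin d) ℂ) (g : G) :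
    Matrix (Fin d) (Fin d) ℂ :=
  (D (σ g)).map (starRingEnd ℂ)

theorem starTwist_mul_transpose {σ : G →* G} {ω : G → G → ℂ}
    (hωσ : ∀ g h, ω g h * ω (σ g) (σ h) = 1) {d : ℕ} {D : G → Matrix (Fin d) (Fin d) ℂ}
    (hD : IsUnitaryProjRep ω D) (g h : G) :
    starTwist σ D h * (D (σ (g * h)))ᵀ = ω g h • (D (σ g))ᵀ := by
  have hσmul : D (σ (g * h)) = ω g h • (D (σ g) * D (σ h)) := by
    rw [hD.2, smul_smul, hωσ, one_smul, map_mul]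
  have hunit : starTwist σ D h * (D (σ h))ᵀ = 1 :=
    map_star_mul_transpose_of_mem_unitaryGroup (hD.1 (σ h))
  rw [hσmul, transpose_smul, transpose_mul, Matrix.mul_smul, ← Matrix.mul_assoc, hunit,
    Matrix.one_mul]

theorem indicator_vanishes_complex_type_general
    {G : Type} [Group G] [Fintype G]
    (σ : G →* G)
    (ω : G → G → ℂ)
    (hωσ : ∀ g h, ω g h * ω (σ g) (σ h) = 1)
    {d : ℕ} (D : G → Matrix (Fin d) (Fin d) ℂ)
    (hD : IsUnitaryProjRep ω D) (hirr : IsIrred D)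
    (hne : ¬ ProjEquiv (fun g => (D (σ g)).map (starRingEnd ℂ)) D) :
    ((Fintype.card G : ℂ))⁻¹ • ∑ g : G, ω (σ g) g • D (σ g * g)
        = (0 : Matrix (Fin d) (Fin d) ℂ) ∧
    ((Fintype.card G : ℂ))⁻¹ * ∑ g : G, ω (σ g) g * Matrix.trace (D (σ g * g)) = 0 := by
  have haverage : ∀ A, ∑ g, (D (σ g))ᵀ * A * D g = 0 := fun A =>
    hirr.eq_zero_of_intertwines_of_not_projEquiv (D₁ := starTwist σ D) hne
      (sum_mul_mul_intertwines hD.2 (starTwist_mul_transpose hωσ hD) A)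
  have hX : ∑ g, ω (σ g) g • D (σ g * g) = 0 := by
    simpa only [hD.2] using sum_mul_eq_zero_of_forall_sum_transpose_mul_mul_eq_zero haverage
  have htrace : ∑ g, ω (σ g) g * trace (D (σ g * g)) = 0 := by
    simpa only [trace_sum, trace_smul, smul_eq_mul, trace_zero] using congrArg trace hX
  exact ⟨by rw [hX, smul_zero], by rw [htrace, mul_zero]⟩

/-- the indicator vanishes for complex-type irreps. -/
theorem indicator_vanishes_complex_type
    {G : Type} [Group G] [Fintype G]
    (σ : G →* G) (hσ : ∀ g, σ (σ g) = g)
    (ω : G → G → ℂ) (hω : ∀ g h, ‖ω g h‖ = 1)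
    (hωσ : ∀ g h, ω g h * ω (σ g) (σ h) = 1)
    {d : ℕ} (D : G → Matrix (Fin d) (Fin d) ℂ)
    (hD : IsUnitaryProjRep ω D) (hirr : IsIrred D)
    (hne : ¬ ProjEquiv (fun g => (D (σ g)).map (starRingEnd ℂ)) D) :
    ((Fintype.card G : ℂ))⁻¹ • ∑ g : G, ω (σ g) g • D (σ g * g)
        = (0 : Matrix (Fin d) (Fin d) ℂ) ∧
    ((Fintype.card G : ℂ))⁻¹ * ∑ g : G, ω (σ g) g * Matrix.trace (D (σ g * g)) = 0 :=
  indicator_vanishes_complex_type_general σ ω hωσ D hD hirr hne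
end
end

section
/- Projective symmetry of the coefficient matrix: let G be a finite group, ω a normalized unitary 2-cocycle on G, and 𝒟 g the ω-projective regular representation matrices. For any c : G → ℂ, let W ∈ Matrix G G ℂ have entries W_{g_l, g_r} = (1/√|G|) · ω g_r (g_r⁻¹ * g_l) · c (g_r⁻¹ * g_l). Then (𝒟 g) * W * (𝒟 g)ᴴ = W for every g ∈ G; consequently the positive semidefinite matrix W * Wᴴ commutes with 𝒟 g for every g ∈ G. -/
open Matrix Kronecker BigOperators

noncomputable section

/-! `projRegRep ω g` is left multiplication by `e g` in the `ω`-twisted group algebra and `W` is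
right multiplication by an element of it, so the two commute by associativity, i.e. the cocycle
identity. As `‖ω‖ = 1`, `projRegRep ω g` is unitary, which turns commutation into invariance under
conjugation and also gives commutation with `Wᴴ`. -/

section ProjRegRep

variable {G : Type} [Group G] [Fintype G] [DecidableEq G] (ω : G → G → ℂ)

theorem projRegRep_mul_apply (g : G) (M : Matrix G G ℂ) (a b : G) :
    (projRegRep ω g * M) a b = ω g (g⁻¹ * a) * M (g⁻¹ * a) b := by
  rw [mul_apply, Finset.sum_eq_single (g⁻¹ * a)]
  · simp [projRegRep]
  · rintro k - hk
    have : a ≠ g * k := by rintro rfl; simp at hk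
    simp [projRegRep, this]
  · simp

theorem mul_projRegRep_apply (g : G) (M : Matrix G G ℂ) (a b : G) :
    (M * projRegRep ω g) a b = M a (g * b) * ω g b := by
  rw [mul_apply, Finset.sum_eq_single (g * b)]
  · simp [projRegRep]
  · rintro k - hk
    simp [projRegRep, hk]
  · simp

theorem projRegRep_mem_unitary (hω : ∀ g h, ‖ω g h‖ = 1) (g : G) :
    projRegRep ω g ∈ unitary (Matrix G G ℂ) := by
  rw [← Matrix.unitaryGroup, Matrix.mem_unitaryGroup_iff', star_eq_conjTranspose]
  ext a b
  rw [mul_projRegRep_apply, conjTranspose_apply, one_apply]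
  by_cases hab : a = b
  · subst hab
    simp [projRegRep, ← Complex.normSq_eq_conj_mul_self, Complex.normSq_eq_norm_sq, hω]
  · simp [projRegRep, hab, Ne.symm hab]

/-- The matrix of right multiplication by `∑ k, f k • e k` in the `ω`-twisted group algebra,
where `e y * e k = ω y k • e (y * k)`. -/
def twistedRightMulMatrix (f : G → ℂ) : Matrix G G ℂ :=
  Matrix.of fun x y => ω y (y⁻¹ * x) * f (y⁻¹ * x)

theorem commute_projRegRep_twistedRightMulMatrix
    (hω : ∀ g h k, ω g h * ω (g * h) k = ω g (h * k) * ω h k) (f : G → ℂ) (g : G) :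
    Commute (projRegRep ω g) (twistedRightMulMatrix ω f) := by
  ext a b
  rw [projRegRep_mul_apply, mul_projRegRep_apply]
  simp only [twistedRightMulMatrix, of_apply]
  have hassoc := hω g b (b⁻¹ * (g⁻¹ * a))
  rw [mul_inv_cancel_left] at hassoc
  rw [_root_.mul_inv_rev, mul_assoc b⁻¹]
  linear_combination (-f (b⁻¹ * (g⁻¹ * a))) * hassoc

end ProjRegRep

theorem Commute.star_right_of_mem_unitary {R : Type*} [Monoid R] [StarMul R] {u x : R}
    (hu : u ∈ unitary R) (h : Commute u x) : Commute u (star x) := by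
  rw [commute_unitary_iff_star_left_conjugate hu, h.star_star.eq, mul_assoc,
    Unitary.star_mul_self_of_mem hu, mul_one]

/-- projective symmetry of the coefficient matrix. -/
theorem coefficient_matrix_projective_symmetry
    {G : Type} [Group G] [Fintype G] [DecidableEq G]
    (ω : G → G → ℂ) (hω : IsCocycle ω)
    (c : G → ℂ)
    (W : Matrix G G ℂ)
    (hW : ∀ gl gr : G,
      W gl gr = ((Real.sqrt (Fintype.card G) : ℂ))⁻¹
        * ω gr (gr⁻¹ * gl) * c (gr⁻¹ * gl)) :
    (∀ g : G, projRegRep ω g * W * (projRegRep ω g)ᴴ = W) ∧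
    (∀ g : G, W * Wᴴ * projRegRep ω g = projRegRep ω g * (W * Wᴴ)) := by
  obtain ⟨hnorm, -, -, hassoc⟩ := hω
  have hW' : W = twistedRightMulMatrix ω fun k => (Real.sqrt (Fintype.card G) : ℂ)⁻¹ * c k := by
    ext x y
    rw [hW, twistedRightMulMatrix, of_apply]
    ring
  have hcomm (g : G) : Commute (projRegRep ω g) W :=
    hW' ▸ commute_projRegRep_twistedRightMulMatrix ω hassoc _ g
  refine ⟨fun g => ?_, fun g => ?_⟩
  · exact (commute_unitary_iff_star_right_conjugate (projRegRep_mem_unitary ω hnorm g)).mp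
      (hcomm g)
  · exact ((hcomm g).mul_right
      ((hcomm g).star_right_of_mem_unitary (projRegRep_mem_unitary ω hnorm g))).eq.symm
end
end

section
/- Triviality of time-reversal-constrained coboundaries on exponent-3 abelian groups: let G be an abelian group in which every element g satisfies g³ = 1, let γ : G → ℂ with |γ(g)| = 1 for all g, and define ω(g,h) = γ(g*h) · γ(g)⁻¹ · γ(h)⁻¹. If ω(g,g) = 1 for all g ∈ G and ω(g,h)² = 1 for all g, h ∈ G, then ω(g,h) = 1 for all g, h ∈ G. -/
open Matrix Kronecker BigOperators

noncomputable section

/-! The condition `ω(g, g) = 1` says `γ(g²) = γ(g)²`; applied twice it gives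
`γ(g)⁴ = γ(g⁴) = γ(g)`, so `γ` takes values in the cube roots of unity, and hence so does `ω`.
Together with `ω² = 1` this forces `ω = 1`. -/

def mulCoboundary {G K : Type*} [Mul G] [Field K] (γ : G → K) (g h : G) : K :=
  γ (g * h) * (γ g)⁻¹ * (γ h)⁻¹

section mulCoboundary

variable {G K : Type*} [Field K]

theorem ne_zero_of_mulCoboundary_self_eq_one [Mul G] {γ : G → K} {g : G}
    (h : mulCoboundary γ g g = 1) : γ g ≠ 0 := by
  rintro hg
  simp [mulCoboundary, hg] at h

theorem apply_mul_self_of_mulCoboundary_self_eq_one [Mul G] {γ : G → K} {g : G}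
    (h : mulCoboundary γ g g = 1) : γ (g * g) = γ g ^ 2 := by
  have hg := ne_zero_of_mulCoboundary_self_eq_one h
  unfold mulCoboundary at h
  field_simp at h
  exact h

theorem apply_pow_three_eq_one_of_mulCoboundary_self_eq_one [Monoid G] {γ : G → K}
    (hdiag : ∀ g, mulCoboundary γ g g = 1) {g : G} (hg : g ^ 3 = 1) : γ g ^ 3 = 1 := by
  have hne := ne_zero_of_mulCoboundary_self_eq_one (hdiag g)
  have hsq : ∀ x, γ (x * x) = γ x ^ 2 :=
    fun x => apply_mul_self_of_mulCoboundary_self_eq_one (hdiag x)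
  have h4 : γ g ^ 4 = γ g := by
    calc γ g ^ 4 = γ (g * g * (g * g)) := by rw [hsq, hsq]; ring
      _ = γ (g ^ 3 * g) := by simp only [pow_succ, pow_zero, one_mul, mul_assoc]
      _ = γ g := by rw [hg, one_mul]
  exact mul_left_cancel₀ hne (by linear_combination h4)

theorem mulCoboundary_pow_three_eq_one [Mul G] {γ : G → K} (hγ : ∀ g, γ g ^ 3 = 1)
    (g h : G) : mulCoboundary γ g h ^ 3 = 1 := by
  simp [mulCoboundary, mul_pow, inv_pow, hγ]

end mulCoboundary

theorem exponent_three_coboundary_trivial_general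
    {G : Type} [CommGroup G]
    (hexp : ∀ g : G, g ^ 3 = 1)
    (γ : G → ℂ)
    (ω : G → G → ℂ)
    (hωdef : ∀ g h, ω g h = γ (g * h) * (γ g)⁻¹ * (γ h)⁻¹)
    (hdiag : ∀ g, ω g g = 1)
    (hsq : ∀ g h, (ω g h) ^ 2 = 1) :
    ∀ g h, ω g h = 1 := by
  obtain rfl : ω = mulCoboundary γ := funext₂ hωdef
  have hγ : ∀ g, γ g ^ 3 = 1 :=
    fun g => apply_pow_three_eq_one_of_mulCoboundary_self_eq_one hdiag (hexp g)
  intro g h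
  exact (pow_eq_one_iff_of_coprime (by norm_num)).mp
    ⟨hsq g h, mulCoboundary_pow_three_eq_one hγ g h⟩

/-- triviality of time-reversal-constrained coboundaries on
exponent-3 abelian groups. -/
theorem exponent_three_coboundary_trivial
    {G : Type} [CommGroup G]
    (hexp : ∀ g : G, g ^ 3 = 1)
    (γ : G → ℂ) (hγ : ∀ g, ‖γ g‖ = 1)
    (ω : G → G → ℂ)
    (hωdef : ∀ g h, ω g h = γ (g * h) * (γ g)⁻¹ * (γ h)⁻¹)
    (hdiag : ∀ g, ω g g = 1)
    (hsq : ∀ g h, (ω g h) ^ 2 = 1) :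
    ∀ g h, ω g h = 1 :=
  exponent_three_coboundary_trivial_general hexp γ ω hωdef hdiag hsq
end
end
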